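/- Let n ∈ J. (a) If V = V₁ ∪_J V₂ is a J-saturated disjoint cover, then V(n:A) = V₁(n:A) ∪_J V₂(n:A) is a J-saturated disjoint cover, where V(n:A) = {⃗a(n:c) : ⃗a ∈ V, c ∈ A}. (b) If V(n:A) = V₁ ∪_J V₂ is a J-saturated disjoint cover, then V₁ = V₁(n:A) and V₂ = V₂(n:A). -/

import Mathlib

/-- Two valuations agree outside `J`: they take the same values on all coordinates not in `J`. -/
def AgreeOutside {ι A : Type*} (J : Set ι) (a b : ι → A) : Prop :=
  ∀ i, i ∉ J → a i = b i

/-- `𝒰` is a `J`-saturated disjoint cover of `V`. -/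
def IsSatDisjCover {ι A : Type*} (J : Set ι) (V : Set (ι → A))
    (𝒰 : Set (Set (ι → A))) : Prop :=
  ⋃₀ 𝒰 = V ∧ 𝒰.Pairwise Disjoint ∧
    ∀ a ∈ V, ∀ b ∈ V, AgreeOutside J a b → ∀ U ∈ 𝒰, a ∈ U → b ∈ U

/-- `V = V₁ ∪_J V₂`: a `J`-saturated disjoint (binary) cover of `V`. -/
def UnionJ {ι A : Type*} (J : Set ι) (V V₁ V₂ : Set (ι → A)) : Prop :=
  V₁ ∪ V₂ = V ∧ Disjoint V₁ V₂ ∧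
    ∀ a ∈ V, ∀ b ∈ V, AgreeOutside J a b →
      ((a ∈ V₁ → b ∈ V₁) ∧ (a ∈ V₂ → b ∈ V₂))

/-- `f : V → A` is independent of `J`. -/
def IndepOf {ι A : Type*} (J : Set ι) (V : Set (ι → A)) (f : (ι → A) → A) : Prop :=
  ∀ a ∈ V, ∀ b ∈ V, AgreeOutside J a b → f a = f b

/-- `V(n:f) = { ⃗a(n : f ⃗a) : ⃗a ∈ V }`. -/
def teamUpd {ι A : Type*} [DecidableEq ι] (n : ι) (f : (ι → A) → A)
    (V : Set (ι → A)) : Set (ι → A) :=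
  (fun a => Function.update a n (f a)) '' V

/-- `V(n:A) = { ⃗a(n : c) : ⃗a ∈ V, c ∈ A }`. -/
def teamExp {ι A : Type*} [DecidableEq ι] (n : ι) (V : Set (ι → A)) : Set (ι → A) :=
  {x | ∃ a ∈ V, ∃ c : A, x = Function.update a n c}

/-! Since `n ∈ J`, changing the `n`-th coordinate never leaves a `≈_J`-class. So passing from
`V` to `V(n:A)` only enlarges `≈_J`-classes, each `J`-saturated part `W` of `V` is carried to
the `J`-saturated part `W(n:A)`, and a `J`-saturated part of `V(n:A)` is already closed under
changing the `n`-th coordinate. -/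

namespace AgreeOutside

variable {ι A : Type*} {J : Set ι} {a b c : ι → A}

theorem symm (h : AgreeOutside J a b) : AgreeOutside J b a :=
  fun i hi => (h i hi).symm

theorem trans (hab : AgreeOutside J a b) (hbc : AgreeOutside J b c) : AgreeOutside J a c :=
  fun i hi => (hab i hi).trans (hbc i hi)

theorem update_left [DecidableEq ι] {n : ι} (hn : n ∈ J) (a : ι → A) (x : A) :
    AgreeOutside J (Function.update a n x) a :=
  fun _ hi => Function.update_of_ne (hn.ne_of_notMem hi).symm x a

end AgreeOutside

def IsSaturatedIn {ι A : Type*} (J : Set ι) (V W : Set (ι → A)) : Prop :=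
  ∀ a ∈ V, ∀ b ∈ V, AgreeOutside J a b → a ∈ W → b ∈ W

theorem unionJ_iff {ι A : Type*} {J : Set ι} {V V₁ V₂ : Set (ι → A)} :
    UnionJ J V V₁ V₂ ↔
      V₁ ∪ V₂ = V ∧ Disjoint V₁ V₂ ∧ IsSaturatedIn J V V₁ ∧ IsSaturatedIn J V V₂ := by
  simp only [UnionJ, IsSaturatedIn]
  grind

section teamExp

variable {ι A : Type*} [DecidableEq ι] {J : Set ι} {n : ι} {V W W₁ W₂ : Set (ι → A)}

theorem update_mem_teamExp {a : ι → A} (ha : a ∈ V) (x : A) :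
    Function.update a n x ∈ teamExp n V :=
  ⟨a, ha, x, rfl⟩

theorem subset_teamExp : V ⊆ teamExp n V :=
  fun a ha => ⟨a, ha, a n, (Function.update_eq_self n a).symm⟩

theorem teamExp_union : teamExp n (W₁ ∪ W₂) = teamExp n W₁ ∪ teamExp n W₂ := by
  ext x
  simp only [teamExp, Set.mem_union, Set.mem_ofPred_eq, or_and_right, exists_or]

theorem teamExp_teamExp : teamExp n (teamExp n V) = teamExp n V := by
  refine subset_antisymm ?_ subset_teamExp
  rintro _ ⟨_, ⟨a, ha, y, rfl⟩, x, rfl⟩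
  rw [Function.update_idem]
  exact update_mem_teamExp ha x

theorem disjoint_teamExp (hn : n ∈ J) (h₁ : IsSaturatedIn J V W₁) (hW₁ : W₁ ⊆ V)
    (hW₂ : W₂ ⊆ V) (hd : Disjoint W₁ W₂) : Disjoint (teamExp n W₁) (teamExp n W₂) := by
  rw [Set.disjoint_left]
  rintro _ ⟨a, ha, x, rfl⟩ ⟨b, hb, y, hab⟩
  have hagree : AgreeOutside J a b :=
    (AgreeOutside.update_left hn a x).symm.trans (hab ▸ AgreeOutside.update_left hn b y)
  exact Set.disjoint_left.mp hd (h₁ a (hW₁ ha) b (hW₂ hb) hagree ha) hb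

theorem isSaturatedIn_teamExp (hn : n ∈ J) (h : IsSaturatedIn J V W) (hW : W ⊆ V) :
    IsSaturatedIn J (teamExp n V) (teamExp n W) := by
  rintro _ - _ ⟨b, hb, y, rfl⟩ hxy ⟨a, ha, x, rfl⟩
  have hab : AgreeOutside J a b :=
    (AgreeOutside.update_left hn a x).symm.trans (hxy.trans (AgreeOutside.update_left hn b y))
  exact update_mem_teamExp (h a (hW ha) b hb hab ha) y

theorem teamExp_eq_of_isSaturatedIn (hn : n ∈ J) (h : IsSaturatedIn J (teamExp n V) W)
    (hW : W ⊆ teamExp n V) : teamExp n W = W := by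
  refine subset_antisymm ?_ subset_teamExp
  rintro _ ⟨a, ha, x, rfl⟩
  have hx : Function.update a n x ∈ teamExp n V :=
    teamExp_teamExp (V := V) ▸ update_mem_teamExp (hW ha) x
  exact h a (hW ha) _ hx (AgreeOutside.update_left hn a x).symm ha

end teamExp

/-- Behaviour of `V(n:A)` with respect to `J`-saturated disjoint covers when `n ∈ J`. -/
theorem teamExp_unionJ {ι A : Type*} [DecidableEq ι] (J : Set ι) (n : ι) (hn : n ∈ J)
    (V V₁ V₂ : Set (ι → A)) :
    (UnionJ J V V₁ V₂ → UnionJ J (teamExp n V) (teamExp n V₁) (teamExp n V₂)) ∧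
    (UnionJ J (teamExp n V) V₁ V₂ → V₁ = teamExp n V₁ ∧ V₂ = teamExp n V₂) := by
  constructor
  · rw [unionJ_iff, unionJ_iff]
    rintro ⟨rfl, hd, h₁, h₂⟩
    exact ⟨teamExp_union.symm, disjoint_teamExp hn h₁ Set.subset_union_left
      Set.subset_union_right hd, isSaturatedIn_teamExp hn h₁ Set.subset_union_left,
      isSaturatedIn_teamExp hn h₂ Set.subset_union_right⟩
  · rw [unionJ_iff]
    rintro ⟨hcov, -, h₁, h₂⟩
    exact ⟨(teamExp_eq_of_isSaturatedIn hn h₁ (hcov ▸ Set.subset_union_left)).symm,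
      (teamExp_eq_of_isSaturatedIn hn h₂ (hcov ▸ Set.subset_union_right)).symm⟩
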